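/- Expected per-crossing patching cost: fix a grid line ℓ of the dissection and a crossing point x of the pair of tours with ℓ, and for level i set α_i(x) = O(pro'(x)) if i ≤ θ(x) and α_i(x) = O((L/(2^i r))² / pro'(x)) otherwise, where θ(x) = log(L / (r · pro'(x))) and pro'(x) is the relaxed proximity of x. Then, using that the probability that ℓ has level i is at most 2^i / L for 0 ≤ i ≤ 1 + log L, the expected patching cost attributed to x satisfies Σ_{i=0}^{1+log L} Pr[ℓ has level i] · α_i(x) = O(1/r). -/

import Mathlib

/-!
Split the levels at θ = log₂ (L / (r·pro)). Below θ the i-th term is at most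
(c₁·pro/L)·2^i, a geometric sum bounded by twice its largest term, hence by
2·2^θ·c₁·pro/L = 2c₁/r. Above θ it is at most (c₂·L/(r²·pro))·2^(-i), bounded by twice
the first term, hence by 2·2^(-θ)·c₂·L/(r²·pro) = 2c₂/r.
-/

open Finset

lemma sum_two_pow_le_of_forall_two_pow_le {s : Finset ℕ} {T : ℝ} (hT : 0 ≤ T)
    (hs : ∀ i ∈ s, (2 : ℝ) ^ i ≤ T) : ∑ i ∈ s, (2 : ℝ) ^ i ≤ 2 * T := by
  rcases s.eq_empty_or_nonempty with rfl | hne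
  · simpa using hT
  set M := s.max' hne
  have hsub : s ⊆ range (M + 1) := fun i hi => mem_range_succ_iff.2 (s.le_max' i hi)
  calc ∑ i ∈ s, (2 : ℝ) ^ i ≤ ∑ i ∈ range (M + 1), (2 : ℝ) ^ i :=
        sum_le_sum_of_subset_of_nonneg hsub fun _ _ _ => by positivity
    _ = 2 * 2 ^ M - 1 := by rw [geom_sum_eq (by norm_num)]; ring
    _ ≤ 2 * T := by linarith [hs M (s.max'_mem hne)]

lemma sum_inv_two_pow_le_of_forall_lt_two_pow {s : Finset ℕ} {T : ℝ} (hT : 0 < T)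
    (hs : ∀ i ∈ s, T < (2 : ℝ) ^ i) : ∑ i ∈ s, ((2 : ℝ) ^ i)⁻¹ ≤ 2 / T := by
  rcases s.eq_empty_or_nonempty with rfl | hne
  · rw [sum_empty]; positivity
  set m := s.min' hne
  have hsub : s ⊆ Ico m (s.max' hne + 1) := fun i hi =>
    mem_Ico.2 ⟨s.min'_le i hi, Nat.lt_succ_of_le (s.le_max' i hi)⟩
  calc ∑ i ∈ s, ((2 : ℝ) ^ i)⁻¹ ≤ ∑ i ∈ Ico m (s.max' hne + 1), (2⁻¹ : ℝ) ^ i := by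
        simp_rw [← inv_pow]
        exact sum_le_sum_of_subset_of_nonneg hsub fun _ _ _ => by positivity
    _ ≤ (2⁻¹ : ℝ) ^ m / (1 - 2⁻¹) := geom_sum_Ico_le_of_lt_one (by norm_num) (by norm_num)
    _ = 2 / 2 ^ m := by rw [inv_pow]; ring
    _ ≤ 2 / T := div_le_div_of_nonneg_left zero_le_two hT (hs m (s.min'_mem hne)).le

lemma sum_mul_le_of_level_bounds {s : Finset ℕ} {L r pro c₁ c₂ : ℝ} {p α : ℕ → ℝ}
    (hL : 0 < L) (hr : 0 < r) (hpro : 0 < pro) (hc₁ : 0 ≤ c₁) (hc₂ : 0 ≤ c₂)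
    (hα : ∀ i, 0 ≤ α i) (hp : ∀ i ∈ s, p i ≤ 2 ^ i / L)
    (hα₁ : ∀ i ∈ s, (2 : ℝ) ^ i ≤ L / (r * pro) → α i ≤ c₁ * pro)
    (hα₂ : ∀ i ∈ s, L / (r * pro) < 2 ^ i → α i ≤ c₂ * ((L / (2 ^ i * r)) ^ 2 / pro)) :
    ∑ i ∈ s, p i * α i ≤ 2 * (c₁ + c₂) / r := by
  set T := L / (r * pro)
  have hT : 0 < T := by positivity
  have hterm : ∀ i ∈ s, ∀ {a : ℝ}, α i ≤ a → p i * α i ≤ 2 ^ i / L * a := fun i hi _ ha =>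
    mul_le_mul (hp i hi) ha (hα i) (by positivity)
  rw [← sum_filter_add_sum_filter_not s fun i => (2 : ℝ) ^ i ≤ T]
  have hlow : ∑ i ∈ s with (2 : ℝ) ^ i ≤ T, p i * α i ≤ 2 * c₁ / r :=
    calc ∑ i ∈ s with (2 : ℝ) ^ i ≤ T, p i * α i
        ≤ ∑ i ∈ s with (2 : ℝ) ^ i ≤ T, c₁ * pro / L * 2 ^ i := by
          refine sum_le_sum fun i hi => ?_
          obtain ⟨hi, hiT⟩ := mem_filter.1 hi
          exact (hterm i hi (hα₁ i hi hiT)).trans_eq (by ring)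
      _ ≤ c₁ * pro / L * (2 * T) := by
          rw [← mul_sum]
          exact mul_le_mul_of_nonneg_left
            (sum_two_pow_le_of_forall_two_pow_le hT.le fun i hi => (mem_filter.1 hi).2)
            (by positivity)
      _ = 2 * c₁ / r := by simp only [T]; field_simp
  have hhigh : ∑ i ∈ s with ¬(2 : ℝ) ^ i ≤ T, p i * α i ≤ 2 * c₂ / r :=
    calc ∑ i ∈ s with ¬(2 : ℝ) ^ i ≤ T, p i * α i
        ≤ ∑ i ∈ s with ¬(2 : ℝ) ^ i ≤ T, c₂ * L / (r ^ 2 * pro) * ((2 : ℝ) ^ i)⁻¹ := by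
          refine sum_le_sum fun i hi => ?_
          obtain ⟨hi, hiT⟩ := mem_filter.1 hi
          exact (hterm i hi (hα₂ i hi (not_le.1 hiT))).trans_eq (by field_simp)
      _ ≤ c₂ * L / (r ^ 2 * pro) * (2 / T) := by
          rw [← mul_sum]
          exact mul_le_mul_of_nonneg_left
            (sum_inv_two_pow_le_of_forall_lt_two_pow hT fun i hi => not_le.1 (mem_filter.1 hi).2)
            (by positivity)
      _ = 2 * c₂ / r := by simp only [T]; field_simp
  rw [mul_add, add_div]
  exact add_le_add hlow hhigh

theorem expected_per_crossing_patching_cost :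
    ∃ C : ℝ, 0 < C ∧
      ∀ (c₁ c₂ : ℝ) (L r : ℕ) (pro : ℝ) (p α : ℕ → ℝ),
        0 ≤ c₁ → 0 ≤ c₂ →
        (∃ k : ℕ, L = 2 ^ k) → 1 ≤ r → 0 < pro →
        (∀ i, 0 ≤ p i) → (∀ i, 0 ≤ α i) →
        -- the probability that ℓ has level i is at most 2^i / L
        (∀ i : ℕ, (i : ℝ) ≤ 1 + Real.logb 2 (L : ℝ) → p i ≤ 2 ^ i / (L : ℝ)) →
        -- α_i(x) = O(pro'(x)) for i ≤ θ(x) …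
        (∀ i : ℕ, (i : ℝ) ≤ Real.logb 2 ((L : ℝ) / ((r : ℝ) * pro)) →
          α i ≤ c₁ * pro) →
        -- … and α_i(x) = O((L/(2^i r))² / pro'(x)) for i > θ(x)
        (∀ i : ℕ, Real.logb 2 ((L : ℝ) / ((r : ℝ) * pro)) < (i : ℝ) →
          α i ≤ c₂ * (((L : ℝ) / (2 ^ i * (r : ℝ))) ^ 2 / pro)) →
        -- the expected patching cost attributed to x is O(1/r)
        ∑ i ∈ Finset.range (⌊1 + Real.logb 2 (L : ℝ)⌋₊ + 1), p i * α i ≤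
          C * (c₁ + c₂) / (r : ℝ) := by
  refine ⟨2, two_pos, fun c₁ c₂ L r pro p α hc₁ hc₂ hL hr hpro _ hα hp hα₁ hα₂ => ?_⟩
  obtain ⟨k, rfl⟩ := hL
  have hL₁ : (1 : ℝ) ≤ (2 ^ k : ℕ) := by exact_mod_cast Nat.one_le_two_pow
  have hr₀ : (0 : ℝ) < r := by exact_mod_cast hr
  have hT : 0 < ((2 ^ k : ℕ) : ℝ) / (r * pro) := by positivity
  have hlevel : 0 ≤ 1 + Real.logb 2 ((2 ^ k : ℕ) : ℝ) := by
    linarith [Real.logb_nonneg one_lt_two hL₁]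
  refine sum_mul_le_of_level_bounds (by positivity) hr₀ hpro hc₁ hc₂ hα
    (fun i hi => hp i ((Nat.le_floor_iff hlevel).1 (mem_range_succ_iff.1 hi)))
    (fun i _ hi => hα₁ i ((Real.le_logb_iff_rpow_le one_lt_two hT).2 (by rwa [Real.rpow_natCast])))
    (fun i _ hi => hα₂ i ((Real.logb_lt_iff_lt_rpow one_lt_two hT).2 (by rwa [Real.rpow_natCast])))
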